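/- arXiv:1807.00964 — 4 statements merged into one kernel-verified Lean document; each statement's English description precedes it below -/
import Mathlib

section
/- Let G be a d-regular simple graph on V with exactly i red edges, where i ≥ 1, and let (v_0,…,v_5) be a 6-tuple of vertices that is valid for a 3-edge switching on G. Then the graph G' obtained by deleting the edges v_0v_1, v_2v_3, v_4v_5 from G and adding the pairs v_0v_5, v_1v_2, v_3v_4 as edges is a d-regular simple graph with exactly i−1 red edges. -/
open SimpleGraph
open scoped Classical

/-- A 6-tuple `(v0,…,v5)` is valid for a 3-edge switching on `G` (host graph `H`):
`v0v1` is a red edge of `G`; `v2v3` and `v4v5` are black edges of `G`;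
`v0v5`, `v1v2`, `v3v4` are black non-edges of `G`; vertices are distinct
except that `v2 = v5` is allowed. -/
def Valid3Switch {n : ℕ} (H G : SimpleGraph (Fin n))
    (v0 v1 v2 v3 v4 v5 : Fin n) : Prop :=
  (G.Adj v0 v1 ∧ Hᶜ.Adj v0 v1) ∧
  (G.Adj v2 v3 ∧ H.Adj v2 v3) ∧
  (G.Adj v4 v5 ∧ H.Adj v4 v5) ∧
  (¬ G.Adj v0 v5 ∧ H.Adj v0 v5) ∧
  (¬ G.Adj v1 v2 ∧ H.Adj v1 v2) ∧
  (¬ G.Adj v3 v4 ∧ H.Adj v3 v4) ∧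
  List.Pairwise (· ≠ ·) [v0, v1, v3, v4] ∧
  (∀ x ∈ [v0, v1, v3, v4], v2 ≠ x ∧ v5 ≠ x)

/-- The 3-edge switching determined by a 6-tuple: delete `v0v1, v2v3, v4v5`
and add `v0v5, v1v2, v3v4`. -/
def Switch3 {n : ℕ} (G : SimpleGraph (Fin n))
    (v0 v1 v2 v3 v4 v5 : Fin n) : SimpleGraph (Fin n) :=
  G.deleteEdges {s(v0, v1), s(v2, v3), s(v4, v5)} ⊔
    SimpleGraph.fromEdgeSet {s(v0, v5), s(v1, v2), s(v3, v4)}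

private lemma sw_adj {n : ℕ} (G : SimpleGraph (Fin n)) (v0 v1 v2 v3 v4 v5 u w : Fin n) :
    (Switch3 G v0 v1 v2 v3 v4 v5).Adj u w ↔
      (G.Adj u w ∧
        ((u = v0 → ¬w = v1) ∧ (u = v1 → ¬w = v0)) ∧
          ((u = v2 → ¬w = v3) ∧ (u = v3 → ¬w = v2)) ∧
            (u = v4 → ¬w = v5) ∧ (u = v5 → ¬w = v4)) ∨
      ((u = v0 ∧ w = v5 ∨ u = v5 ∧ w = v0) ∨
        (u = v1 ∧ w = v2 ∨ u = v2 ∧ w = v1) ∨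
          u = v3 ∧ w = v4 ∨ u = v4 ∧ w = v3) ∧ ¬u = w := by
  simp [Switch3, deleteEdges_adj, fromEdgeSet_adj, Sym2.eq_iff]

private lemma deg_aux {n : ℕ} (G' G : SimpleGraph (Fin n)) (v a b : Fin n)
    (h : G'.neighborFinset v = insert b ((G.neighborFinset v).erase a))
    (ha : G.Adj v a) (hb : ¬ G.Adj v b) :
    G'.degree v = G.degree v := by
  have haN : a ∈ G.neighborFinset v := by simpa [mem_neighborFinset] using ha
  have hbN : b ∉ (G.neighborFinset v).erase a := fun hmem =>
    hb (by simpa [mem_neighborFinset] using Finset.mem_of_mem_erase hmem)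
  rw [← card_neighborFinset_eq_degree, ← card_neighborFinset_eq_degree, h,
    Finset.card_insert_of_notMem hbN, Finset.card_erase_of_mem haN,
    Nat.sub_add_cancel (Finset.card_pos.2 ⟨a, haN⟩)]

set_option maxHeartbeats 2000000 in
/-- A 3-edge switching applied to a `d`-regular graph `G` with exactly
`i ≥ 1` red edges produces a `d`-regular graph with exactly `i - 1` red edges. -/
theorem stmt_3 (n d i : ℕ) (hn : 0 < n) (hd : 0 < d) (hi : 1 ≤ i)
    (H G : SimpleGraph (Fin n)) (hreg : G.IsRegularOfDegree d)
    (hred : (G ⊓ Hᶜ).edgeSet.ncard = i)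
    (v0 v1 v2 v3 v4 v5 : Fin n)
    (hv : Valid3Switch H G v0 v1 v2 v3 v4 v5) :
    (Switch3 G v0 v1 v2 v3 v4 v5).IsRegularOfDegree d ∧
      ((Switch3 G v0 v1 v2 v3 v4 v5) ⊓ Hᶜ).edgeSet.ncard = i - 1 := by
  obtain ⟨⟨h01, hc01⟩, ⟨h23, hH23⟩, ⟨h45, hH45⟩, ⟨hn05, hH05⟩, ⟨hn12, hH12⟩,
    ⟨hn34, hH34⟩, hpw, hex⟩ := hv
  rw [compl_adj] at hc01
  obtain ⟨ne01, hnH01⟩ := hc01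
  obtain ⟨ne20, ne50⟩ := hex v0 (by simp)
  obtain ⟨ne21, ne51⟩ := hex v1 (by simp)
  obtain ⟨ne23, ne53⟩ := hex v3 (by simp)
  obtain ⟨ne24, ne54⟩ := hex v4 (by simp)
  rcases hpw with _ | ⟨ha, _ | ⟨hb, _ | ⟨hc, -⟩⟩⟩
  have ne03 : v0 ≠ v3 := ha v3 (by simp)
  have ne04 : v0 ≠ v4 := ha v4 (by simp)
  have ne13 : v1 ≠ v3 := hb v3 (by simp)
  have ne14 : v1 ≠ v4 := hb v4 (by simp)
  have ne34 : v3 ≠ v4 := hc v4 (by simp)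
  constructor
  · -- regularity
    intro v
    by_cases hv0 : v = v0
    · rw [hv0]
      have hN : (Switch3 G v0 v1 v2 v3 v4 v5).neighborFinset v0
          = insert v5 ((G.neighborFinset v0).erase v1) := by
        ext w
        simp only [mem_neighborFinset, sw_adj, Finset.mem_insert, Finset.mem_erase]
        aesop
      rw [deg_aux _ G v0 v1 v5 hN h01 hn05]; exact hreg v0
    · by_cases hv1 : v = v1
      · rw [hv1]
        have hN : (Switch3 G v0 v1 v2 v3 v4 v5).neighborFinset v1
            = insert v2 ((G.neighborFinset v1).erase v0) := by
          ext w
          simp only [mem_neighborFinset, sw_adj, Finset.mem_insert, Finset.mem_erase]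
          aesop
        rw [deg_aux _ G v1 v0 v2 hN h01.symm hn12]; exact hreg v1
      · by_cases hv3 : v = v3
        · rw [hv3]
          have hN : (Switch3 G v0 v1 v2 v3 v4 v5).neighborFinset v3
              = insert v4 ((G.neighborFinset v3).erase v2) := by
            ext w
            simp only [mem_neighborFinset, sw_adj, Finset.mem_insert, Finset.mem_erase]
            aesop
          rw [deg_aux _ G v3 v2 v4 hN h23.symm hn34]; exact hreg v3
        · by_cases hv4 : v = v4
          · rw [hv4]
            have hN : (Switch3 G v0 v1 v2 v3 v4 v5).neighborFinset v4
                = insert v3 ((G.neighborFinset v4).erase v5) := by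
              ext w
              simp only [mem_neighborFinset, sw_adj, Finset.mem_insert, Finset.mem_erase]
              aesop
            rw [deg_aux _ G v4 v5 v3 hN h45 (fun h => hn34 h.symm)]; exact hreg v4
          · by_cases hv2 : v = v2
            · rw [hv2]
              by_cases h25 : v2 = v5
              · -- v2 = v5 : double switch at this vertex
                subst h25
                have hN : (Switch3 G v0 v1 v2 v3 v4 v2).neighborFinset v2
                    = insert v0 (insert v1 (((G.neighborFinset v2).erase v3).erase v4)) := by
                  ext w
                  simp only [mem_neighborFinset, sw_adj, Finset.mem_insert, Finset.mem_erase]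
                  aesop
                have h3N : v3 ∈ G.neighborFinset v2 := by
                  simpa [mem_neighborFinset] using h23
                have h4N : v4 ∈ (G.neighborFinset v2).erase v3 :=
                  Finset.mem_erase.2 ⟨ne34.symm, by simpa [mem_neighborFinset] using h45.symm⟩
                have h1not : v1 ∉ ((G.neighborFinset v2).erase v3).erase v4 := fun hm =>
                  hn12 ((by simpa [mem_neighborFinset] using
                    Finset.mem_of_mem_erase (Finset.mem_of_mem_erase hm) : G.Adj v2 v1)).symm
                have h0not : v0 ∉ insert v1 (((G.neighborFinset v2).erase v3).erase v4) := by
                  intro hmem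
                  rcases Finset.mem_insert.1 hmem with h | h
                  · exact ne01 h
                  · exact hn05 ((by simpa [mem_neighborFinset] using
                      Finset.mem_of_mem_erase (Finset.mem_of_mem_erase h) : G.Adj v2 v0)).symm
                have hcard2 : 1 < (G.neighborFinset v2).card :=
                  Finset.one_lt_card.2 ⟨v3, h3N, v4, Finset.mem_of_mem_erase h4N, ne34⟩
                have hd2 : (G.neighborFinset v2).card = d := hreg v2
                rw [← card_neighborFinset_eq_degree, hN,
                  Finset.card_insert_of_notMem h0not, Finset.card_insert_of_notMem h1not,
                  Finset.card_erase_of_mem h4N, Finset.card_erase_of_mem h3N, hd2]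
                omega
              · have hN : (Switch3 G v0 v1 v2 v3 v4 v5).neighborFinset v2
                    = insert v1 ((G.neighborFinset v2).erase v3) := by
                  ext w
                  simp only [mem_neighborFinset, sw_adj, Finset.mem_insert, Finset.mem_erase]
                  aesop
                rw [deg_aux _ G v2 v3 v1 hN h23 (fun h => hn12 h.symm)]; exact hreg v2
            · by_cases hv5 : v = v5
              · rw [hv5]
                have h52 : v5 ≠ v2 := fun h => hv2 (hv5.trans h)
                have hN : (Switch3 G v0 v1 v2 v3 v4 v5).neighborFinset v5
                    = insert v0 ((G.neighborFinset v5).erase v4) := by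
                  ext w
                  simp only [mem_neighborFinset, sw_adj, Finset.mem_insert, Finset.mem_erase]
                  aesop
                rw [deg_aux _ G v5 v4 v0 hN h45.symm (fun h => hn05 h.symm)]; exact hreg v5
              · have hN : (Switch3 G v0 v1 v2 v3 v4 v5).neighborFinset v
                    = G.neighborFinset v := by
                  ext w
                  simp only [mem_neighborFinset, sw_adj]
                  aesop
                rw [← card_neighborFinset_eq_degree, hN, card_neighborFinset_eq_degree]
                exact hreg v
  · -- red edge count
    have hset : ((Switch3 G v0 v1 v2 v3 v4 v5) ⊓ Hᶜ).edgeSet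
        = (G ⊓ Hᶜ).edgeSet \ {s(v0, v1)} := by
      ext e
      induction e using Sym2.ind with
      | _ u w =>
        simp only [Set.mem_diff, Set.mem_singleton_iff, mem_edgeSet, inf_adj, compl_adj,
          sw_adj, Sym2.eq_iff]
        constructor
        · rintro ⟨(⟨hG, ⟨hd1, hd2⟩, ⟨hd3, hd4⟩, hd5, hd6⟩ |
            ⟨((⟨rfl, rfl⟩ | ⟨rfl, rfl⟩) | (⟨rfl, rfl⟩ | ⟨rfl, rfl⟩) |
              ⟨rfl, rfl⟩ | ⟨rfl, rfl⟩), hne⟩), hnw, hnH⟩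
          · refine ⟨⟨hG, hnw, hnH⟩, ?_⟩
            rintro (⟨rfl, rfl⟩ | ⟨rfl, rfl⟩)
            · exact hd1 rfl rfl
            · exact hd2 rfl rfl
          · exact absurd hH05 hnH
          · exact absurd hH05.symm hnH
          · exact absurd hH12 hnH
          · exact absurd hH12.symm hnH
          · exact absurd hH34 hnH
          · exact absurd hH34.symm hnH
        · rintro ⟨⟨hG, hnw, hnH⟩, h01'⟩
          refine ⟨Or.inl ⟨hG, ⟨?_, ?_⟩, ⟨?_, ?_⟩, ?_, ?_⟩, hnw, hnH⟩
          · exact fun h1 h2 => h01' (Or.inl ⟨h1, h2⟩)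
          · exact fun h1 h2 => h01' (Or.inr ⟨h1, h2⟩)
          · rintro rfl rfl; exact hnH hH23
          · rintro rfl rfl; exact hnH hH23.symm
          · rintro rfl rfl; exact hnH hH45
          · rintro rfl rfl; exact hnH hH45.symm
    rw [hset, Set.ncard_diff_singleton_of_mem (by
      simp only [mem_edgeSet, inf_adj, compl_adj]
      exact ⟨h01, ne01, hnH01⟩), hred]
end

section
/- Let Δ be the maximum degree of H̄, let i ≥ 0 be an integer with dn ≥ 2i + 7d, and let G be a d-regular simple graph on V with exactly i red edges. Then the number f(G) of 6-tuples valid for a 3-edge switching on G satisfies 2i(dn−2i−4d)(dn−2i−7d) − 6id²(d+Δ)n ≤ f(G) ≤ 2i(dn)². -/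
open SimpleGraph
open scoped Classical

/-- `f(G)`: the number of 6-tuples valid for a 3-edge switching on `G`. -/
noncomputable def f3 {n : ℕ} (H G : SimpleGraph (Fin n)) : ℕ :=
  Nat.card {v : Fin 6 → Fin n //
    Valid3Switch H G (v 0) (v 1) (v 2) (v 3) (v 4) (v 5)}

/-!
Valid tuples are exactly the triples `(e, f, g)` of darts of `G` with `e` red that satisfy the
remaining conditions, which gives the upper bound `2i · (dn)²`.

For the lower bound fix one of the `2i` red darts `e = (v₀, v₁)`. A vertex set of size `k`
is the tail (or head) of at most `k d` darts, and at most `2i` darts are red. The second dart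
`f = (v₂, v₃)` is admissible as soon as it is black, `v₂ ∉ N_G(v₁) ∪ N_H̄(v₁) ∪ {v₀, v₁}` and
`v₃ ∉ {v₀, v₁}`; this excludes at most `2i + 4d + d(d + Δ)` of the `dn` darts. The third dart
`g = (v₄, v₅)` is admissible as soon as it is black, `v₄ ∉ N_G(v₃) ∪ N_H̄(v₃) ∪ {v₀, v₁, v₂, v₃}`
and `v₅ ∉ N_G(v₀) ∪ N_H̄(v₀) ∪ {v₀, v₁, v₃}`, excluding at most `2i + 7d + 2d(d + Δ)` darts.
With `a = dn - 2i - 4d`, `b = dn - 2i - 7d` (both in `[0, dn]` by hypothesis) and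
`c = d(d + Δ)`, the product of the two counts is at least `(a - c)₊ (b - 2c)₊ ≥ ab - 3c·dn`.
-/

open Finset

namespace SimpleGraph

variable {V : Type*} [Fintype V] [DecidableEq V] (G K : SimpleGraph V) [DecidableRel G.Adj]
  [DecidableRel K.Adj]

theorem card_filter_dart_fst_mem_le (s : Finset V) :
    #{x : G.Dart | x.fst ∈ s} ≤ #s * G.maxDegree := by
  rw [card_eq_sum_card_fiberwise (f := fun x => x.fst) (t := s) fun x hx => by simpa using hx]
  refine (sum_le_sum fun v _ => ?_).trans_eq (sum_const_nat fun _ _ => rfl)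
  calc _ ≤ #{x : G.Dart | x.fst = v} := card_le_card (by intro x; simp +contextual)
    _ = G.degree v := G.dart_fst_fiber_card_eq_degree v
    _ ≤ G.maxDegree := G.degree_le_maxDegree v

theorem card_filter_dart_snd_mem_le (s : Finset V) :
    #{x : G.Dart | x.snd ∈ s} ≤ #s * G.maxDegree := by
  refine (card_equiv (Equiv.mk Dart.symm Dart.symm Dart.symm_symm Dart.symm_symm) ?_).trans_le
    (G.card_filter_dart_fst_mem_le s)
  simp

omit [DecidableEq V] in
theorem card_filter_dart_adj_eq :
    #{x : G.Dart | K.Adj x.fst x.snd} = Fintype.card (G ⊓ K).Dart := by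
  rw [← Fintype.card_subtype]
  exact Fintype.card_congr
    { toFun := fun x => ⟨x.1.toProd, x.1.adj, x.2⟩
      invFun := fun x => ⟨⟨x.toProd, x.adj.1⟩, x.adj.2⟩
      left_inv := fun _ => rfl
      right_inv := fun _ => rfl }

theorem card_dart_le_card_filter_add (s t : Finset V) :
    Fintype.card G.Dart ≤ #{x : G.Dart | ¬K.Adj x.fst x.snd ∧ x.fst ∉ s ∧ x.snd ∉ t} +
      Fintype.card (G ⊓ K).Dart + #s * G.maxDegree + #t * G.maxDegree := by
  rw [← card_filter_dart_adj_eq, ← card_univ]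
  grw [← card_filter_dart_fst_mem_le, ← card_filter_dart_snd_mem_le, ← card_union_le,
    ← card_union_le, ← card_union_le]
  refine card_le_card fun x _ => ?_
  simp only [mem_union, mem_filter, mem_univ, true_and]
  tauto

theorem card_neighborFinset_union_le (v : V) (u : Finset V) :
    #(G.neighborFinset v ∪ K.neighborFinset v ∪ u) ≤ G.maxDegree + K.maxDegree + #u := by
  grw [card_union_le, card_union_le, card_neighborFinset_eq_degree, card_neighborFinset_eq_degree,
    degree_le_maxDegree, degree_le_maxDegree]

end SimpleGraph

theorem Fintype.card_mul_mul_le_card_subtype_prod {α β γ : Type*} [Fintype α] [Fintype β]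
    [Fintype γ] (P : α → β → Prop) (Q : α → β → γ → Prop) [∀ a, DecidablePred (P a)]
    [∀ a b, DecidablePred (Q a b)] {A B : ℕ} (hP : ∀ a, A ≤ #{b | P a b})
    (hQ : ∀ a b, B ≤ #{c | Q a b c}) :
    card α * (A * B) ≤ card {t : α × β × γ // P t.1 t.2.1 ∧ Q t.1 t.2.1 t.2.2} := by
  calc card α * (A * B) = ∑ _a : α, A * B := by simp
    _ ≤ ∑ a, ∑ b ∈ {b | P a b}, #{c | Q a b c} := by
      gcongr with a
      grw [hP a, ← card_nsmul_le_sum _ _ _ fun b _ => hQ a b, smul_eq_mul]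
    _ = card {t : α × β × γ // P t.1 t.2.1 ∧ Q t.1 t.2.1 t.2.2} := by
      simp only [card_subtype, card_filter, sum_prod_type, sum_filter, ite_and, sum_ite_irrel,
        sum_const_zero]

theorem Nat.mul_sub_le_tsub_mul_tsub {a b c N : ℕ} (ha : a ≤ N) (hb : b ≤ N) :
    (a * b : ℤ) - 3 * c * N ≤ ((a - c) * (b - 2 * c) : ℕ) := by
  rcases le_or_gt c a with hca | hca
  · rcases le_or_gt (2 * c) b with hcb | hcb
    · push_cast [hca, hcb]
      nlinarith
    · rw [Nat.sub_eq_zero_of_le hcb.le, mul_zero, Nat.cast_zero]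
      nlinarith
  · rw [Nat.sub_eq_zero_of_le hca.le, zero_mul, Nat.cast_zero]
    nlinarith

variable {n : ℕ} (H G : SimpleGraph (Fin n))

def valid3SwitchEquivDarts :
    {v : Fin 6 → Fin n // Valid3Switch H G (v 0) (v 1) (v 2) (v 3) (v 4) (v 5)} ≃
      {t : (G ⊓ Hᶜ).Dart × G.Dart × G.Dart //
        Valid3Switch H G t.1.fst t.1.snd t.2.1.fst t.2.1.snd t.2.2.fst t.2.2.snd} where
  toFun v := ⟨(⟨(v.1 0, v.1 1), v.2.1⟩, ⟨(v.1 2, v.1 3), v.2.2.1.1⟩, ⟨(v.1 4, v.1 5), v.2.2.2.1.1⟩),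
    v.2⟩
  invFun t := ⟨![t.1.1.fst, t.1.1.snd, t.1.2.1.fst, t.1.2.1.snd, t.1.2.2.fst, t.1.2.2.snd], t.2⟩
  left_inv v := Subtype.ext <| funext fun j => by fin_cases j <;> rfl
  right_inv _ := rfl

theorem f3_eq_card : f3 H G = Fintype.card {t : (G ⊓ Hᶜ).Dart × G.Dart × G.Dart //
    Valid3Switch H G t.1.fst t.1.snd t.2.1.fst t.2.1.snd t.2.2.fst t.2.2.snd} := by
  rw [f3, Nat.card_congr (valid3SwitchEquivDarts H G), Nat.card_eq_fintype_card]

theorem valid3Switch_of_notMem {v₀ v₁ v₂ v₃ v₄ v₅ : Fin n} (h₀₁ : (G ⊓ Hᶜ).Adj v₀ v₁)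
    (h₂₃ : G.Adj v₂ v₃) (h₂₃' : ¬Hᶜ.Adj v₂ v₃) (h₄₅ : G.Adj v₄ v₅) (h₄₅' : ¬Hᶜ.Adj v₄ v₅)
    (h₂ : v₂ ∉ G.neighborFinset v₁ ∪ Hᶜ.neighborFinset v₁ ∪ {v₀, v₁})
    (h₃ : v₃ ∉ ({v₀, v₁} : Finset _))
    (h₄ : v₄ ∉ G.neighborFinset v₃ ∪ Hᶜ.neighborFinset v₃ ∪ {v₀, v₁, v₂, v₃})
    (h₅ : v₅ ∉ G.neighborFinset v₀ ∪ Hᶜ.neighborFinset v₀ ∪ {v₀, v₁, v₃}) :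
    Valid3Switch H G v₀ v₁ v₂ v₃ v₄ v₅ := by
  simp only [mem_union, mem_neighborFinset, mem_insert, mem_singleton, not_or, compl_adj,
    not_and, not_not] at h₂₃' h₄₅' h₂ h₃ h₄ h₅
  simp only [Valid3Switch, h₀₁.1, h₀₁.2, h₂₃, h₄₅, List.pairwise_cons, List.mem_cons]
  grind [h₀₁.ne, h₂₃.ne, h₄₅.ne]

theorem card_mul_le_f3 {d : ℕ} (hd : G.maxDegree ≤ d) :
    Fintype.card (G ⊓ Hᶜ).Dart *
      ((Fintype.card G.Dart - (Fintype.card (G ⊓ Hᶜ).Dart + 4 * d + d * (d + Hᶜ.maxDegree))) *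
        (Fintype.card G.Dart - (Fintype.card (G ⊓ Hᶜ).Dart + 7 * d +
          2 * (d * (d + Hᶜ.maxDegree))))) ≤ f3 H G := by
  rw [f3_eq_card]
  refine (Fintype.card_mul_mul_le_card_subtype_prod
    (fun e f => ¬Hᶜ.Adj f.fst f.snd ∧
      f.fst ∉ G.neighborFinset e.snd ∪ Hᶜ.neighborFinset e.snd ∪ {e.fst, e.snd} ∧
      f.snd ∉ ({e.fst, e.snd} : Finset _))
    (fun e f g => ¬Hᶜ.Adj g.fst g.snd ∧
      g.fst ∉ G.neighborFinset f.snd ∪ Hᶜ.neighborFinset f.snd ∪ {e.fst, e.snd, f.fst, f.snd} ∧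
      g.snd ∉ G.neighborFinset e.fst ∪ Hᶜ.neighborFinset e.fst ∪ {e.fst, e.snd, f.snd})
    (fun e => ?_) (fun e f => ?_)).trans (Fintype.card_subtype_mono _ _ fun t ht =>
      valid3Switch_of_notMem H G t.1.adj t.2.1.adj ht.1.1 t.2.2.adj ht.2.1 ht.1.2.1 ht.1.2.2
        ht.2.2.1 ht.2.2.2)
  · have hcount := G.card_dart_le_card_filter_add Hᶜ
      (G.neighborFinset e.snd ∪ Hᶜ.neighborFinset e.snd ∪ {e.fst, e.snd}) {e.fst, e.snd}
    grw [card_neighborFinset_union_le, card_le_two, hd] at hcount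
    rw [tsub_le_iff_right]
    nlinarith
  · have hcount := G.card_dart_le_card_filter_add Hᶜ
      (G.neighborFinset f.snd ∪ Hᶜ.neighborFinset f.snd ∪ {e.fst, e.snd, f.fst, f.snd})
      (G.neighborFinset e.fst ∪ Hᶜ.neighborFinset e.fst ∪ {e.fst, e.snd, f.snd})
    grw [card_neighborFinset_union_le, card_neighborFinset_union_le, card_le_four, card_le_three,
      hd] at hcount
    rw [tsub_le_iff_right]
    nlinarith

theorem f3_le_card_mul :
    f3 H G ≤ Fintype.card (G ⊓ Hᶜ).Dart * (Fintype.card G.Dart * Fintype.card G.Dart) := by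
  rw [f3_eq_card, ← Fintype.card_prod, ← Fintype.card_prod]
  exact Fintype.card_subtype_le _

theorem stmt_4_general (n d i : ℕ)
    (H : SimpleGraph (Fin n)) (hdn : 2 * i + 7 * d ≤ d * n)
    (G : SimpleGraph (Fin n)) (hreg : G.IsRegularOfDegree d)
    (hred : (G ⊓ Hᶜ).edgeSet.ncard = i) :
    (2 * i * (d * n - 2 * i - 4 * d) * (d * n - 2 * i - 7 * d)
        - 6 * i * d ^ 2 * (d + Hᶜ.maxDegree) * n : ℤ) ≤ (f3 H G : ℤ) ∧
      (f3 H G : ℤ) ≤ 2 * i * (d * n) ^ 2 := by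
  have hdarts : Fintype.card G.Dart = d * n := by
    simp [dart_card_eq_sum_degrees, hreg _, mul_comm]
  have hred_darts : Fintype.card (G ⊓ Hᶜ).Dart = 2 * i := by
    rw [dart_card_eq_twice_card_edges, ← hred, ← Set.ncard_coe_finset, coe_edgeFinset]
  have hlower := card_mul_le_f3 H G (G.maxDegree_le_of_forall_degree_le d fun v => (hreg v).le)
  have hupper := f3_le_card_mul H G
  rw [hdarts, hred_darts] at hlower hupper
  set c := d * (d + Hᶜ.maxDegree)
  refine ⟨?_, by exact_mod_cast hupper.trans_eq (by ring)⟩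
  have ha : ((d * n - 2 * i - 4 * d : ℕ) : ℤ) = d * n - 2 * i - 4 * d := by omega
  have hb : ((d * n - 2 * i - 7 * d : ℕ) : ℤ) = d * n - 2 * i - 7 * d := by omega
  have key := Nat.mul_sub_le_tsub_mul_tsub (c := c) (a := d * n - 2 * i - 4 * d)
    (b := d * n - 2 * i - 7 * d) (N := d * n) (by omega) (by omega)
  rw [show d * n - (2 * i + 4 * d + c) = d * n - 2 * i - 4 * d - c by omega,
    show d * n - (2 * i + 7 * d + 2 * c) = d * n - 2 * i - 7 * d - 2 * c by omega] at hlower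
  calc _ = 2 * (i : ℤ) * (((d * n - 2 * i - 4 * d : ℕ) : ℤ) * (d * n - 2 * i - 7 * d : ℕ)
        - 3 * c * (d * n : ℕ)) := by rw [ha, hb]; push_cast [c]; ring
    _ ≤ 2 * i * ((d * n - 2 * i - 4 * d - c) * (d * n - 2 * i - 7 * d - 2 * c) : ℕ) := by gcongr
    _ ≤ f3 H G := by exact_mod_cast hlower

/-- forward-count bounds of Lemma 3. If `G` is `d`-regular with exactly
`i` red edges and `dn ≥ 2i + 7d`, then
`2i(dn−2i−4d)(dn−2i−7d) − 6id²(d+Δ)n ≤ f(G) ≤ 2i(dn)²`, with `Δ` the maximum degree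
of `Hᶜ`. -/
theorem stmt_4 (n d i : ℕ) (hn : 0 < n) (hd : 0 < d)
    (H : SimpleGraph (Fin n)) (hdn : 2 * i + 7 * d ≤ d * n)
    (G : SimpleGraph (Fin n)) (hreg : G.IsRegularOfDegree d)
    (hred : (G ⊓ Hᶜ).edgeSet.ncard = i) :
    (2 * i * (d * n - 2 * i - 4 * d) * (d * n - 2 * i - 7 * d)
        - 6 * i * d ^ 2 * (d + Hᶜ.maxDegree) * n : ℤ) ≤ (f3 H G : ℤ) ∧
      (f3 H G : ℤ) ≤ 2 * i * (d * n) ^ 2 :=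
  stmt_4_general n d i H hdn G hreg hred
end

section
/- Let G be a d-regular simple graph on V with exactly i red edges and let (v_0,…,v_7) be an 8-tuple valid for a 4-edge switching on G. Then the graph G' obtained by deleting the edges v_0v_1, v_2v_3, v_4v_5, v_6v_7 and adding the pairs v_0v_7, v_1v_2, v_3v_4, v_5v_6 as edges is a d-regular simple graph, and its number of red edges equals i − 1 − |{e ∈ {{v_2,v_3},{v_6,v_7}} : e is a red pair}| + |{e ∈ {{v_1,v_2},{v_0,v_7}} : e is a red pair}|. In particular, if v_1v_2, v_2v_3, v_0v_7, v_6v_7 are all black (a Class A switching), then G' has exactly i−1 red edges. -/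
open SimpleGraph
open scoped Classical

/-- Distinctness of an 8-tuple, except that `v2 = v7` is allowed. -/
def Distinct8 {n : ℕ} (v0 v1 v2 v3 v4 v5 v6 v7 : Fin n) : Prop :=
  List.Pairwise (· ≠ ·) [v0, v1, v3, v4, v5, v6] ∧
  (∀ x ∈ [v0, v1, v3, v4, v5, v6], v2 ≠ x ∧ v7 ≠ x)

/-- An 8-tuple `(v0,…,v7)` is valid for a 4-edge switching on `G` (host graph `H`):
`v0v1` is a red edge of `G`; `v2v3`, `v4v5`, `v6v7` are edges of `G`;
`v0v7`, `v1v2`, `v3v4`, `v5v6` are not edges of `G`; none of `v3v4`, `v4v5`, `v5v6`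
is red; vertices distinct except `v2 = v7` allowed; and among the four pairs
`v1v2, v2v3, v0v7, v6v7` either none is red, or exactly one is red, or both `v1v2`
and `v2v3` are red while `v0v7` and `v6v7` are black, or both `v0v7` and `v6v7` are
red while `v1v2` and `v2v3` are black. -/
def Valid4Switch {n : ℕ} (H G : SimpleGraph (Fin n))
    (v0 v1 v2 v3 v4 v5 v6 v7 : Fin n) : Prop :=
  (G.Adj v0 v1 ∧ Hᶜ.Adj v0 v1) ∧
  G.Adj v2 v3 ∧ G.Adj v4 v5 ∧ G.Adj v6 v7 ∧
  ¬ G.Adj v0 v7 ∧ ¬ G.Adj v1 v2 ∧ ¬ G.Adj v3 v4 ∧ ¬ G.Adj v5 v6 ∧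
  ¬ Hᶜ.Adj v3 v4 ∧ ¬ Hᶜ.Adj v4 v5 ∧ ¬ Hᶜ.Adj v5 v6 ∧
  Distinct8 v0 v1 v2 v3 v4 v5 v6 v7 ∧
  ((¬ Hᶜ.Adj v1 v2 ∧ ¬ Hᶜ.Adj v2 v3 ∧ ¬ Hᶜ.Adj v0 v7 ∧ ¬ Hᶜ.Adj v6 v7) ∨
   (Hᶜ.Adj v1 v2 ∧ ¬ Hᶜ.Adj v2 v3 ∧ ¬ Hᶜ.Adj v0 v7 ∧ ¬ Hᶜ.Adj v6 v7) ∨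
   (¬ Hᶜ.Adj v1 v2 ∧ Hᶜ.Adj v2 v3 ∧ ¬ Hᶜ.Adj v0 v7 ∧ ¬ Hᶜ.Adj v6 v7) ∨
   (¬ Hᶜ.Adj v1 v2 ∧ ¬ Hᶜ.Adj v2 v3 ∧ Hᶜ.Adj v0 v7 ∧ ¬ Hᶜ.Adj v6 v7) ∨
   (¬ Hᶜ.Adj v1 v2 ∧ ¬ Hᶜ.Adj v2 v3 ∧ ¬ Hᶜ.Adj v0 v7 ∧ Hᶜ.Adj v6 v7) ∨
   (Hᶜ.Adj v1 v2 ∧ Hᶜ.Adj v2 v3 ∧ H.Adj v0 v7 ∧ H.Adj v6 v7) ∨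
   (Hᶜ.Adj v0 v7 ∧ Hᶜ.Adj v6 v7 ∧ H.Adj v1 v2 ∧ H.Adj v2 v3))

/-- The 4-edge switching: delete `v0v1, v2v3, v4v5, v6v7`; add `v0v7, v1v2, v3v4, v5v6`. -/
def Switch4 {n : ℕ} (G : SimpleGraph (Fin n))
    (v0 v1 v2 v3 v4 v5 v6 v7 : Fin n) : SimpleGraph (Fin n) :=
  G.deleteEdges {s(v0, v1), s(v2, v3), s(v4, v5), s(v6, v7)} ⊔
    SimpleGraph.fromEdgeSet {s(v0, v7), s(v1, v2), s(v3, v4), s(v5, v6)}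

/-!
The switching deletes the edges `D = {v0v1, v2v3, v4v5, v6v7}` of `G` and adds the non-edges
`A = {v0v7, v1v2, v3v4, v5v6}`, so for every set `P` of pairs
`|E(G') ∩ P| + |D ∩ P| = |E(G) ∩ P| + |A ∩ P|`.
`D` and `A` are the two classes of alternate edges of the closed walk `v0 v1 ⋯ v7 v0`, so
every vertex lies on equally many pairs of `D` and of `A`; taking `P` to be the pairs through
a vertex gives regularity. Taking `P` to be the red pairs, `v0v1` is red while `v4v5`, `v3v4`
and `v5v6` are not, which gives the red-edge count.
-/

namespace Set

variable {α : Type*} {s A D E : Set α} {a : α} {p : α → Prop} [DecidablePred p]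

theorem ncard_insert_inter_setOf_of_notMem (ha : a ∉ s) (hs : s.Finite) :
    (insert a s ∩ {x | p x}).ncard = (s ∩ {x | p x}).ncard + if p a then 1 else 0 := by
  by_cases hpa : p a
  · rw [if_pos hpa, insert_inter_of_mem (t := {x | p x}) hpa,
      ncard_insert_of_notMem (fun h => ha h.1) (hs.inter_of_left _)]
  · rw [if_neg hpa, insert_inter_of_notMem (t := {x | p x}) hpa, add_zero]

theorem ncard_singleton_inter_setOf : ({a} ∩ {x | p x}).ncard = if p a then 1 else 0 := by
  by_cases hpa : p a
  · rw [if_pos hpa, singleton_inter_of_mem (s := {x | p x}) hpa, ncard_singleton]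
  · rw [if_neg hpa, singleton_inter_of_notMem (s := {x | p x}) hpa, ncard_empty]

theorem ncard_four_inter_setOf {b c d : α} (hab : a ≠ b) (hac : a ≠ c) (had : a ≠ d)
    (hbc : b ≠ c) (hbd : b ≠ d) (hcd : c ≠ d) :
    ({a, b, c, d} ∩ {x | p x}).ncard =
      (if p a then 1 else 0) + (if p b then 1 else 0) + (if p c then 1 else 0) +
        (if p d then 1 else 0) := by
  rw [ncard_insert_inter_setOf_of_notMem (by simp [hab, hac, had]) (toFinite _),
    ncard_insert_inter_setOf_of_notMem (by simp [hbc, hbd]) (toFinite _),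
    ncard_insert_inter_setOf_of_notMem (by simpa using hcd) (toFinite _),
    ncard_singleton_inter_setOf]
  ring

theorem ncard_sdiff_union_inter_add (hE : E.Finite) (hA : A.Finite) (hDE : D ⊆ E)
    (hAE : Disjoint A E) (P : Set α) :
    ((E \ D ∪ A) ∩ P).ncard + (D ∩ P).ncard = (E ∩ P).ncard + (A ∩ P).ncard := by
  have hsplit : (E \ D ∪ A) ∩ P = (E ∩ P) \ (D ∩ P) ∪ A ∩ P := by
    ext x; simp only [mem_inter_iff, mem_union, mem_sdiff]; tauto
  have hdisj : Disjoint ((E ∩ P) \ (D ∩ P)) (A ∩ P) :=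
    hAE.symm.mono (sdiff_subset.trans inter_subset_left) inter_subset_left
  rw [hsplit, ncard_union_eq hdisj ((hE.inter_of_left P).sdiff) (hA.inter_of_left P),
    add_right_comm, ncard_sdiff_add_ncard_of_subset (inter_subset_inter_left P hDE)
      (hE.inter_of_left P)]

end Set

theorem Sym2.ite_mem_mk {α : Type*} {x a b : α} [Decidable (x ∈ s(a, b))] [Decidable (x = a)]
    [Decidable (x = b)] (hab : a ≠ b) :
    (if x ∈ s(a, b) then 1 else 0 : ℕ) =
      (if x = a then 1 else 0) + (if x = b then 1 else 0) := by
  by_cases hxa : x = a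
  · subst hxa; simp [hab]
  · simp [hxa]

namespace SimpleGraph

variable {V : Type*} (G : SimpleGraph V)

theorem degree_eq_ncard_edgeSet_inter (v : V) [Fintype (G.neighborSet v)] :
    G.degree v = (G.edgeSet ∩ {e | v ∈ e}).ncard := by
  classical
  rw [← card_incidenceSet_eq_degree, ← Nat.card_eq_fintype_card, Nat.card_coe_set_eq]
  rfl

theorem edgeSet_deleteEdges_sup_fromEdgeSet {D A : Set (Sym2 V)} (hA : ∀ e ∈ A, ¬ e.IsDiag) :
    (G.deleteEdges D ⊔ fromEdgeSet A).edgeSet = G.edgeSet \ D ∪ A := by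
  have hAdiag : A \ Sym2.diagSet = A := sdiff_eq_left.mpr (Set.disjoint_left.mpr hA)
  rw [edgeSet_sup, edgeSet_deleteEdges, edgeSet_fromEdgeSet, hAdiag]

theorem ncard_edgeSet_deleteEdges_sup_fromEdgeSet_inter [Finite V] {D A : Set (Sym2 V)}
    (hD : D ⊆ G.edgeSet) (hA : Disjoint A G.edgeSet) (hAdiag : ∀ e ∈ A, ¬ e.IsDiag)
    (P : Set (Sym2 V)) :
    ((G.deleteEdges D ⊔ fromEdgeSet A).edgeSet ∩ P).ncard + (D ∩ P).ncard =
      (G.edgeSet ∩ P).ncard + (A ∩ P).ncard := by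
  rw [G.edgeSet_deleteEdges_sup_fromEdgeSet hAdiag]
  exact Set.ncard_sdiff_union_inter_add (Set.toFinite _) (Set.toFinite _) hD hA P

end SimpleGraph

namespace Valid4Switch

variable {n : ℕ} {H G : SimpleGraph (Fin n)} {v0 v1 v2 v3 v4 v5 v6 v7 : Fin n}

theorem added_ne (hv : Valid4Switch H G v0 v1 v2 v3 v4 v5 v6 v7) :
    v0 ≠ v7 ∧ v1 ≠ v2 ∧ v3 ≠ v4 ∧ v5 ≠ v6 := by
  obtain ⟨-, -, -, -, -, -, -, -, -, -, -, ⟨hp, hq⟩, -⟩ := hv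
  simp only [List.pairwise_cons, List.mem_cons, List.not_mem_nil, List.Pairwise.nil,
    forall_eq_or_imp] at hp hq
  tauto

theorem ncard_edgeSet_switch4_inter_add (hv : Valid4Switch H G v0 v1 v2 v3 v4 v5 v6 v7)
    (p : Sym2 (Fin n) → Prop) [DecidablePred p] :
    ((Switch4 G v0 v1 v2 v3 v4 v5 v6 v7).edgeSet ∩ {e | p e}).ncard +
        ((if p s(v0, v1) then 1 else 0) + (if p s(v2, v3) then 1 else 0) +
          (if p s(v4, v5) then 1 else 0) + (if p s(v6, v7) then 1 else 0)) =
      (G.edgeSet ∩ {e | p e}).ncard +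
        ((if p s(v0, v7) then 1 else 0) + (if p s(v1, v2) then 1 else 0) +
          (if p s(v3, v4) then 1 else 0) + (if p s(v5, v6) then 1 else 0)) := by
  have hA := hv.added_ne
  obtain ⟨⟨a01, -⟩, a23, a45, a67, na07, na12, na34, na56, -, -, -, ⟨hp, hq⟩, -⟩ := hv
  simp only [List.pairwise_cons, List.mem_cons, List.not_mem_nil, List.Pairwise.nil,
    forall_eq_or_imp] at hp hq
  rw [← Set.ncard_four_inter_setOf, ← Set.ncard_four_inter_setOf]
  · refine G.ncard_edgeSet_deleteEdges_sup_fromEdgeSet_inter ?_ ?_ ?_ _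
    · simp only [Set.insert_subset_iff, Set.singleton_subset_iff, mem_edgeSet]
      exact ⟨a01, a23, a45, a67⟩
    · simp only [Set.disjoint_insert_left, Set.disjoint_singleton_left, mem_edgeSet]
      exact ⟨na07, na12, na34, na56⟩
    · simp only [Set.mem_insert_iff, Set.mem_singleton_iff, forall_eq_or_imp, forall_eq,
        Sym2.mk_isDiag_iff]
      exact hA
  all_goals simp only [ne_eq, Sym2.eq_iff]; tauto

theorem degree_switch4 (hv : Valid4Switch H G v0 v1 v2 v3 v4 v5 v6 v7) (x : Fin n) :
    (Switch4 G v0 v1 v2 v3 v4 v5 v6 v7).degree x = G.degree x := by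
  have key := hv.ncard_edgeSet_switch4_inter_add (x ∈ ·)
  obtain ⟨n07, n12, n34, n56⟩ := hv.added_ne
  obtain ⟨⟨a01, -⟩, a23, a45, a67, -⟩ := hv
  simp only [Sym2.ite_mem_mk a01.ne, Sym2.ite_mem_mk a23.ne, Sym2.ite_mem_mk a45.ne,
    Sym2.ite_mem_mk a67.ne, Sym2.ite_mem_mk n07, Sym2.ite_mem_mk n12, Sym2.ite_mem_mk n34,
    Sym2.ite_mem_mk n56] at key
  rw [degree_eq_ncard_edgeSet_inter, degree_eq_ncard_edgeSet_inter]
  omega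

theorem ncard_red_switch4_add (hv : Valid4Switch H G v0 v1 v2 v3 v4 v5 v6 v7) :
    ((Switch4 G v0 v1 v2 v3 v4 v5 v6 v7) ⊓ Hᶜ).edgeSet.ncard +
        (1 + (if Hᶜ.Adj v2 v3 then 1 else 0) + (if Hᶜ.Adj v6 v7 then 1 else 0)) =
      (G ⊓ Hᶜ).edgeSet.ncard +
        ((if Hᶜ.Adj v0 v7 then 1 else 0) + (if Hᶜ.Adj v1 v2 then 1 else 0)) := by
  have key := hv.ncard_edgeSet_switch4_inter_add (· ∈ Hᶜ.edgeSet)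
  obtain ⟨⟨-, r01⟩, -, -, -, -, -, -, -, nr34, nr45, nr56, -⟩ := hv
  simp only [Set.ofPred_mem_eq, mem_edgeSet, if_pos r01, if_neg nr34, if_neg nr45,
    if_neg nr56] at key
  rw [edgeSet_inf, edgeSet_inf]
  omega

end Valid4Switch

/-- A 4-edge switching applied to a `d`-regular graph `G` with exactly
`i` red edges produces a `d`-regular graph `G'` whose number of red edges is
`i − 1 − #{red pairs among {v2v3, v6v7}} + #{red pairs among {v1v2, v0v7}}`; in
particular, if `v1v2, v2v3, v0v7, v6v7` are all black (Class A), `G'` has exactly `i-1`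
red edges. -/
theorem stmt_9 (n d i : ℕ) (H G : SimpleGraph (Fin n))
    (hreg : G.IsRegularOfDegree d)
    (hred : (G ⊓ Hᶜ).edgeSet.ncard = i)
    (v0 v1 v2 v3 v4 v5 v6 v7 : Fin n)
    (hv : Valid4Switch H G v0 v1 v2 v3 v4 v5 v6 v7) :
    (Switch4 G v0 v1 v2 v3 v4 v5 v6 v7).IsRegularOfDegree d ∧
    (((Switch4 G v0 v1 v2 v3 v4 v5 v6 v7) ⊓ Hᶜ).edgeSet.ncard : ℤ) =
      (i : ℤ) - 1
        - ((if Hᶜ.Adj v2 v3 then 1 else 0) + (if Hᶜ.Adj v6 v7 then 1 else 0))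
        + ((if Hᶜ.Adj v1 v2 then 1 else 0) + (if Hᶜ.Adj v0 v7 then 1 else 0)) ∧
    (H.Adj v1 v2 → H.Adj v2 v3 → H.Adj v0 v7 → H.Adj v6 v7 →
      (((Switch4 G v0 v1 v2 v3 v4 v5 v6 v7) ⊓ Hᶜ).edgeSet.ncard : ℤ) =
        (i : ℤ) - 1) := by
  have hcount := hv.ncard_red_switch4_add
  rw [hred] at hcount
  refine ⟨fun x => (hv.degree_switch4 x).trans (hreg x), by split_ifs at hcount ⊢ <;> omega,
    fun h12 h23 h07 h67 => ?_⟩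
  simp only [compl_adj, h12, h23, h07, h67, not_true_eq_false, and_false, if_false] at hcount
  omega
end

section
/- Suppose H is (n−Δ−1)-regular and let G be a d-regular simple graph on V with exactly i red edges, where dn ≥ 2i + 12. Let (v_0,…,v_7) be a Type IIb+ octagon in G. Then the number b̂(G,v) of 8-tuples (y_1,…,y_8) of additional vertices on which an inverse Type IIb+ switching can be performed with this octagon satisfies (dn−2i−12)⁴ − 6(dn)³d² − 6(dn)³Δd ≤ b̂(G,v) ≤ (dn)⁴. -/
open SimpleGraph
open scoped Classical

/-- A Type IIb+ octagon in `G` (host graph `H`): `v0v1` and `v1v2` are red edges of `G`;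
`v0v7`, `v3v4`, `v5v6` are black edges of `G`; `v2v3`, `v4v5`, `v6v7` are black
non-edges of `G`; vertices distinct except `v2 = v7` allowed. -/
def OctIIbPlus {n : ℕ} (H G : SimpleGraph (Fin n))
    (v0 v1 v2 v3 v4 v5 v6 v7 : Fin n) : Prop :=
  (G.Adj v0 v1 ∧ Hᶜ.Adj v0 v1) ∧
  (G.Adj v1 v2 ∧ Hᶜ.Adj v1 v2) ∧
  (G.Adj v0 v7 ∧ H.Adj v0 v7) ∧
  (G.Adj v3 v4 ∧ H.Adj v3 v4) ∧
  (G.Adj v5 v6 ∧ H.Adj v5 v6) ∧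
  (¬ G.Adj v2 v3 ∧ H.Adj v2 v3) ∧
  (¬ G.Adj v4 v5 ∧ H.Adj v4 v5) ∧
  (¬ G.Adj v6 v7 ∧ H.Adj v6 v7) ∧
  Distinct8 v0 v1 v2 v3 v4 v5 v6 v7

/-- `b̂(G,v)`: given a Type IIb+ octagon `(v0,…,v7)` in `G`, the number of 8-tuples
`(y1,…,y8)` of vertices such that `y1y2`, `y3y4`, `y5y6`, `y7y8` are black edges of `G`
which are pairwise distinct and distinct from the edges `v0v7`, `v3v4`, `v5v6`, and
`v0y1`, `v1y3`, `v1y5`, `v2y7`, `y2y4`, `y6y8` are black non-edges of `G`.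
(Here `y i` is `y_{i+1}` in 1-indexed notation.) -/
noncomputable def bhatIIb {n : ℕ} (H G : SimpleGraph (Fin n))
    (v0 v1 v2 v3 v4 v5 v6 v7 : Fin n) : ℕ :=
  Nat.card {y : Fin 8 → Fin n //
    (G.Adj (y 0) (y 1) ∧ H.Adj (y 0) (y 1)) ∧
    (G.Adj (y 2) (y 3) ∧ H.Adj (y 2) (y 3)) ∧
    (G.Adj (y 4) (y 5) ∧ H.Adj (y 4) (y 5)) ∧
    (G.Adj (y 6) (y 7) ∧ H.Adj (y 6) (y 7)) ∧
    List.Pairwise (· ≠ ·)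
      [s(y 0, y 1), s(y 2, y 3), s(y 4, y 5), s(y 6, y 7)] ∧
    (∀ e ∈ [s(y 0, y 1), s(y 2, y 3), s(y 4, y 5), s(y 6, y 7)],
      e ≠ s(v0, v7) ∧ e ≠ s(v3, v4) ∧ e ≠ s(v5, v6)) ∧
    (¬ G.Adj v0 (y 0) ∧ H.Adj v0 (y 0)) ∧
    (¬ G.Adj v1 (y 2) ∧ H.Adj v1 (y 2)) ∧
    (¬ G.Adj v1 (y 4) ∧ H.Adj v1 (y 4)) ∧
    (¬ G.Adj v2 (y 6) ∧ H.Adj v2 (y 6)) ∧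
    (¬ G.Adj (y 1) (y 3) ∧ H.Adj (y 1) (y 3)) ∧
    (¬ G.Adj (y 5) (y 7) ∧ H.Adj (y 5) (y 7))}

/-!
Encode `y` as four ordered black edges `p k = (y (2k), y (2k+1))` drawn from the set `A` of
ordered black edges of `G` other than the three octagon edges; then `dn - 2i - 6 ≤ |A| ≤ dn`
and `b̂` counts the tuples in `A⁴` whose edges are distinct and which meet the six black
non-edge conditions. Two given edges coincide for at most `2|A|³` tuples, which costs
`12|A|³`. A vertex `x` is a forbidden partner for at most `d + Δ + 1` vertices (its
`G`-neighbours and its `H`-non-neighbours, `x` included), one fewer for each red `G`-edge at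
`x`. Each condition pins an endpoint of one edge to the forbidden partners of a vertex fixed by
the other coordinates, so it fails for at most `(forbidden partners) · d · |A|³` tuples.
Since `v0`, `v2` carry one red edge and `v1` two, the six failures add up to at most
`6(d + Δ)d|A|³`. Finally `(dn - 2i - 12)⁴ ≤ (|A| - 6)⁴ ≤ |A|⁴ - 12|A|³` once `|A| ≥ 14`;
below that the error term `6(dn)³d²` alone exceeds the main term.
-/

open Finset Function

def IsBlackNonEdge {V : Type*} (H G : SimpleGraph V) (x y : V) : Prop := ¬G.Adj x y ∧ H.Adj x y

namespace SimpleGraph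

variable {V : Type*} [Fintype V]

noncomputable def adjPairs (G : SimpleGraph V) : Finset (V × V) := {p | G.Adj p.1 p.2}

variable {G H : SimpleGraph V} {d Δ : ℕ}

@[simp] theorem mem_adjPairs {p : V × V} : p ∈ G.adjPairs ↔ G.Adj p.1 p.2 := by
  simp [adjPairs]

theorem card_filter_adjPairs_fst_mem [DecidableEq V] (B : Finset V) :
    #{p ∈ G.adjPairs | p.1 ∈ B} = ∑ v ∈ B, G.degree v := by
  rw [card_eq_sum_card_fiberwise (f := Prod.fst) (t := B) fun p hp => by simp_all]
  refine sum_congr rfl fun v hv => ?_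
  rw [← card_neighborFinset_eq_degree]
  refine card_nbij' Prod.snd (fun w => (v, w)) ?_ ?_ ?_ ?_ <;> intro p <;> aesop

theorem card_filter_adjPairs_snd_mem [DecidableEq V] (B : Finset V) :
    #{p ∈ G.adjPairs | p.2 ∈ B} = ∑ v ∈ B, G.degree v := by
  rw [← card_filter_adjPairs_fst_mem]
  refine card_nbij' Prod.swap Prod.swap ?_ ?_ ?_ ?_ <;> intro p <;> simp [G.adj_comm]

theorem card_adjPairs : #G.adjPairs = 2 * G.edgeSet.ncard := by
  have h := card_filter_adjPairs_fst_mem (G := G) univ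
  simp only [mem_univ, filter_true, sum_degrees_eq_twice_card_edges] at h
  rw [h, ← coe_edgeFinset, Set.ncard_coe_finset]

theorem card_adjPairs_inf_add_inf_compl :
    #(G ⊓ H).adjPairs + #(G ⊓ Hᶜ).adjPairs = #G.adjPairs := by
  rw [← card_filter_add_card_filter_not (s := G.adjPairs) (fun p => H.Adj p.1 p.2)]
  congr 2 <;> ext p <;> simp only [mem_adjPairs, mem_filter, inf_adj, compl_adj]
  constructor
  · rintro ⟨h, -, h'⟩; exact ⟨h, h'⟩
  · rintro ⟨h, h'⟩; exact ⟨h, h.ne, h'⟩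

theorem card_filter_adjPairs_fst_mem_of_isRegular [DecidableEq V] (hG : G.IsRegularOfDegree d)
    (B : Finset V) : #{p ∈ G.adjPairs | p.1 ∈ B} = #B * d := by
  simp [card_filter_adjPairs_fst_mem, hG.degree_eq]

theorem card_filter_adjPairs_snd_mem_of_isRegular [DecidableEq V] (hG : G.IsRegularOfDegree d)
    (B : Finset V) : #{p ∈ G.adjPairs | p.2 ∈ B} = #B * d := by
  simp [card_filter_adjPairs_snd_mem, hG.degree_eq]

theorem card_adjPairs_of_isRegular [DecidableEq V] (hG : G.IsRegularOfDegree d) :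
    #G.adjPairs = d * Fintype.card V := by
  simpa [mul_comm] using card_filter_adjPairs_fst_mem_of_isRegular hG univ

theorem card_filter_not_isBlackNonEdge_add_card_le [DecidableEq V]
    (hG : G.IsRegularOfDegree d) (hH : H.IsRegularOfDegree (Fintype.card V - Δ - 1)) (x : V)
    (R : Finset V) (hR : ∀ y ∈ R, (G ⊓ Hᶜ).Adj x y) :
    #{y | ¬IsBlackNonEdge H G x y} + #R ≤ d + Δ + 1 := by
  have hsplit : ({y | ¬IsBlackNonEdge H G x y} : Finset V) =
      G.neighborFinset x ∪ (H.neighborFinset x)ᶜ := by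
    ext y
    simp only [mem_filter, mem_univ, true_and, mem_union, mem_compl, mem_neighborFinset]
    unfold IsBlackNonEdge
    tauto
  have hR' : R ⊆ G.neighborFinset x ∩ (H.neighborFinset x)ᶜ := fun y hy => by
    obtain ⟨hGxy, -, hHxy⟩ := hR y hy
    simpa using ⟨hGxy, hHxy⟩
  have hHc : #(H.neighborFinset x)ᶜ ≤ Δ + 1 := by
    rw [card_compl, card_neighborFinset_eq_degree, hH.degree_eq]; omega
  have hG' : #(G.neighborFinset x) = d := by rw [card_neighborFinset_eq_degree, hG.degree_eq]
  have := card_union_add_card_inter (G.neighborFinset x) (H.neighborFinset x)ᶜ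
  have := card_le_card hR'
  rw [hsplit]
  omega

end SimpleGraph

theorem card_le_card_filter_forall_add_sum {α ι : Type*} [DecidableEq α] [Fintype ι]
    (s : Finset α) (P : ι → α → Prop) [∀ j, DecidablePred (P j)] :
    #s ≤ #{a ∈ s | ∀ j, P j a} + ∑ j, #{a ∈ s | ¬P j a} := by
  have hsub : s ⊆ {a ∈ s | ∀ j, P j a} ∪ univ.biUnion fun j => {a ∈ s | ¬P j a} := by
    intro a ha
    by_cases h : ∀ j, P j a
    · exact mem_union_left _ (mem_filter.2 ⟨ha, h⟩)
    · obtain ⟨j, hj⟩ := not_forall.1 h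
      exact mem_union_right _ (mem_biUnion.2 ⟨j, mem_univ _, mem_filter.2 ⟨ha, hj⟩⟩)
  exact (card_le_card hsub).trans ((card_union_le _ _).trans (by gcongr; exact card_biUnion_le))

theorem card_filter_sym2_mem_le {α : Type*} [DecidableEq α] (s : Finset (α × α))
    (E : Finset (Sym2 α)) : #{q ∈ s | s(q.1, q.2) ∈ E} ≤ 2 * #E := by
  refine card_le_mul_card_image_of_maps_to (fun q hq => (mem_filter.1 hq).2) 2 fun z _ => ?_
  induction z with
  | h a b =>
    refine (card_le_card fun q hq => ?_).trans (card_le_two (a := (a, b)) (b := (b, a)))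
    simp only [mem_filter] at hq
    rcases Sym2.eq_iff.1 hq.2 with ⟨h1, h2⟩ | ⟨h1, h2⟩ <;> simp [Prod.ext_iff, h1, h2]

section PiFinset

variable {ι β : Type*} [Fintype ι] [DecidableEq ι] [DecidableEq β]

theorem card_filter_piFinset_const_le_of_forall_mem (A : Finset β) (k : ι)
    (P : (ι → β) → Prop) [DecidablePred P] (t : (ι → β) → Finset β)
    (ht : ∀ p x, t (update p k x) = t p) {c : ℕ} (hc : ∀ p, #(t p) ≤ c)
    (hP : ∀ p ∈ Fintype.piFinset fun _ => A, P p → p k ∈ t p) :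
    #{p ∈ Fintype.piFinset fun _ => A | P p} ≤ c * #A ^ (Fintype.card ι - 1) := by
  let π : (ι → β) → {i // i ≠ k} → β := fun p i => p i
  have hπ : ∀ p q, π p = π q → p = update q k (p k) := fun p q h => by
    funext i
    by_cases hi : i = k
    · subst hi; simp
    · simpa [hi] using congrFun h ⟨i, hi⟩
  have hcard : #(Fintype.piFinset fun _ : {i // i ≠ k} => A) = #A ^ (Fintype.card ι - 1) := by
    rw [Fintype.card_piFinset, prod_const, card_univ, Fintype.card_subtype_compl (· = k),
      Fintype.card_subtype_eq]
  rw [← hcard]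
  refine card_le_mul_card_image_of_maps_to (f := π) (fun p hp => ?_) c fun r _ => ?_
  · simp only [mem_filter, Fintype.mem_piFinset] at hp ⊢
    exact fun i => hp.1 i
  rcases (({p ∈ Fintype.piFinset fun _ : ι => A | P p}).filter (π · = r)).eq_empty_or_nonempty
    with h | ⟨q, hq⟩
  · simp [h]
  have hq' : π q = r := (mem_filter.1 hq).2
  -- on a fibre of `π` the set `t` is constant and `p ↦ p k` is injective
  refine (card_le_card_of_injOn (· k) (t := t q) (fun p hp => ?_) fun p hp p' hp' h => ?_).trans
    (hc q)
  · simp only [coe_filter, mem_filter, Set.mem_ofPred_eq] at hp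
    rw [mem_coe, ← ht q (p k), ← hπ p q (hp.2.trans hq'.symm)]
    exact hP p hp.1.1 hp.1.2
  · simp only [coe_filter, mem_filter, Set.mem_ofPred_eq] at hp hp'
    rw [hπ p q (hp.2.trans hq'.symm), hπ p' q (hp'.2.trans hq'.symm)]
    simp only at h
    rw [h]

theorem card_filter_piFinset_not_injective_sym2_le {α : Type*} [DecidableEq α] [LinearOrder ι]
    (A : Finset (α × α)) :
    #{p ∈ Fintype.piFinset fun _ : ι => A | ¬Injective fun i => s((p i).1, (p i).2)} ≤
      #{jk : ι × ι | jk.1 < jk.2} * (2 * #A ^ (Fintype.card ι - 1)) := by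
  have hsub : {p ∈ Fintype.piFinset fun _ : ι => A | ¬Injective fun i => s((p i).1, (p i).2)} ⊆
      ({jk : ι × ι | jk.1 < jk.2} : Finset _).biUnion fun jk =>
        {p ∈ Fintype.piFinset fun _ : ι => A |
          s((p jk.2).1, (p jk.2).2) = s((p jk.1).1, (p jk.1).2)} := by
    intro p hp
    simp only [mem_filter, not_injective_iff] at hp
    obtain ⟨hpA, j, k, hjk, hne⟩ := hp
    simp only [mem_biUnion, mem_filter, mem_univ, true_and]
    rcases hne.lt_or_gt with h | h
    · exact ⟨(j, k), h, hpA, hjk.symm⟩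
    · exact ⟨(k, j), h, hpA, hjk⟩
  refine (card_le_card hsub).trans (card_biUnion_le.trans ?_)
  rw [← smul_eq_mul, ← sum_const]
  refine sum_le_sum fun jk hjk => card_filter_piFinset_const_le_of_forall_mem A jk.2 _
    (fun p => {p jk.1, (p jk.1).swap}) (fun p x => ?_) (fun p => card_le_two) fun p _ hp => ?_
  · rw [update_of_ne (mem_filter.1 hjk).2.ne]
  · rw [mem_insert, mem_singleton]
    exact Sym2.mk_eq_mk_iff.1 hp

theorem card_filter_piFinset_not_rel_le {V : Type*} [Fintype V] [DecidableEq V]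
    (A : Finset β) (k : ι) (r : V → V → Prop) [DecidableRel r] (u : (ι → β) → V)
    (hu : ∀ p x, u (update p k x) = u p) (f : β → V) {d b : ℕ}
    (hf : ∀ B : Finset V, #{q ∈ A | f q ∈ B} ≤ #B * d) (hb : ∀ p, #{y | ¬r (u p) y} ≤ b) :
    #{p ∈ Fintype.piFinset fun _ => A | ¬r (u p) (f (p k))} ≤
      b * d * #A ^ (Fintype.card ι - 1) := by
  refine card_filter_piFinset_const_le_of_forall_mem A k _ (fun p => {q ∈ A | ¬r (u p) (f q)})
    (fun p x => by rw [hu]) (fun p => ?_) fun p hpA hp => ?_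
  · calc #{q ∈ A | ¬r (u p) (f q)} = #{q ∈ A | f q ∈ ({y | ¬r (u p) y} : Finset V)} := by
          congr 1; ext q; simp
      _ ≤ b * d := (hf _).trans (Nat.mul_le_mul_right d (hb p))
  · exact mem_filter.2 ⟨Fintype.mem_piFinset.1 hpA k, hp⟩

end PiFinset

theorem pow_four_sub_le_of_pow_four_le {x a b E : ℤ} (hx : 0 ≤ x) (ha : x + 6 ≤ a)
    (hb : 0 ≤ b) (hE : 7 ^ 4 ≤ E) (h : a ^ 4 ≤ b + 12 * a ^ 3 + E) : x ^ 4 - E ≤ b := by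
  rcases le_or_gt x 7 with hx7 | hx8
  · have : x ^ 4 ≤ 7 ^ 4 := pow_le_pow_left₀ hx hx7 4
    linarith
  -- `(x + 6)⁴ - 12(x + 6)³ - x⁴ = 12((x - 8)(x² + 8x + 28) + 116)`, and `a ↦ a⁴ - 12a³`
  -- increases for `a ≥ 12`
  · have h1 : 0 ≤ (x - 8) * (x ^ 2 + 8 * x + 28) :=
      mul_nonneg (by linarith) (by positivity)
    have h2 : 0 ≤ (a - (x + 6)) *
        ((a - 12) * (a ^ 2 + a * (x + 6) + (x + 6) ^ 2) + (x + 6) ^ 3) :=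
      mul_nonneg (by linarith) (by nlinarith)
    linarith

theorem pow_four_sub_le_of_card_bounds {d n Δ i a b : ℕ} (hdn : 2 * i + 12 ≤ d * n)
    (hle : a ≤ d * n) (hge : d * n ≤ a + 2 * i + 6)
    (h : a ^ 4 ≤ b + 12 * a ^ 3 + 6 * (d + Δ) * d * a ^ 3) :
    (d * n - 2 * i - 12 : ℤ) ^ 4 - 6 * (d * n) ^ 3 * d ^ 2 - 6 * (d * n) ^ 3 * Δ * d ≤ b := by
  have hd : (1 : ℤ) ≤ d := by exact_mod_cast Nat.pos_of_ne_zero (by rintro rfl; simp at hdn)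
  have hdn' : (2 * i + 12 : ℤ) ≤ d * n := by exact_mod_cast hdn
  have hle' : (a : ℤ) ≤ d * n := by exact_mod_cast hle
  have hge' : (d * n : ℤ) ≤ a + 2 * i + 6 := by exact_mod_cast hge
  have h' : (a : ℤ) ^ 4 ≤ b + 12 * a ^ 3 + 6 * (d + Δ) * d * a ^ 3 := by exact_mod_cast h
  rw [sub_sub]
  refine pow_four_sub_le_of_pow_four_le (a := a) (by linarith) (by linarith) (Nat.cast_nonneg _)
    ?_ ?_
  · have h3 : (12 : ℤ) ^ 3 ≤ (d * n) ^ 3 := pow_le_pow_left₀ (by norm_num) (by linarith) 3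
    nlinarith [mul_le_mul h3 (one_le_pow₀ hd : (1 : ℤ) ≤ d ^ 2) (by norm_num) (by positivity),
      (by positivity : (0 : ℤ) ≤ (d * n) ^ 3 * Δ * d)]
  · have h3 : (a : ℤ) ^ 3 ≤ (d * n) ^ 3 := pow_le_pow_left₀ (by positivity) hle' 3
    nlinarith [mul_le_mul_of_nonneg_left h3 (by positivity : (0 : ℤ) ≤ 6 * (d + Δ) * d)]

section InverseSwitching

variable {V : Type*} [Fintype V] [DecidableEq V]

noncomputable def freeBlackPairs (H G : SimpleGraph V) (v0 v3 v4 v5 v6 v7 : V) :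
    Finset (V × V) :=
  {q ∈ (G ⊓ H).adjPairs | s(q.1, q.2) ∉ ({s(v0, v7), s(v3, v4), s(v5, v6)} : Finset (Sym2 V))}

/-- With `p k = (y_{2k+1}, y_{2k+2})`, these are the pairs `v0y1, v1y3, v1y5, v2y7, y2y4, y6y8`
that must be black non-edges. -/
def switchingPairs (v0 v1 v2 : V) (p : Fin 4 → V × V) : Fin 6 → V × V :=
  ![(v0, (p 0).1), (v1, (p 1).1), (v1, (p 2).1), (v2, (p 3).1), ((p 0).2, (p 1).2),
    ((p 2).2, (p 3).2)]

noncomputable def inverseSwitchings (H G : SimpleGraph V) (v0 v1 v2 v3 v4 v5 v6 v7 : V) :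
    Finset (Fin 4 → V × V) :=
  {p ∈ Fintype.piFinset fun _ => freeBlackPairs H G v0 v3 v4 v5 v6 v7 |
    (Injective fun k => s((p k).1, (p k).2)) ∧
      ∀ j, IsBlackNonEdge H G (switchingPairs v0 v1 v2 p j).1 (switchingPairs v0 v1 v2 p j).2}

theorem bhatIIb_eq_card_inverseSwitchings {n : ℕ} (H G : SimpleGraph (Fin n))
    (v0 v1 v2 v3 v4 v5 v6 v7 : Fin n) :
    bhatIIb H G v0 v1 v2 v3 v4 v5 v6 v7 = #(inverseSwitchings H G v0 v1 v2 v3 v4 v5 v6 v7) := by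
  let pairs : (Fin 8 → Fin n) → Fin 4 → Fin n × Fin n :=
    fun y => ![(y 0, y 1), (y 2, y 3), (y 4, y 5), (y 6, y 7)]
  let unpairs : (Fin 4 → Fin n × Fin n) → Fin 8 → Fin n :=
    fun p => ![(p 0).1, (p 0).2, (p 1).1, (p 1).2, (p 2).1, (p 2).2, (p 3).1, (p 3).2]
  have hpairs : ∀ p, pairs (unpairs p) = p := fun p => by
    funext k
    fin_cases k <;> rfl
  rw [bhatIIb, Nat.card_eq_fintype_card, Fintype.card_subtype]
  refine card_nbij' pairs unpairs (fun y hy => ?_) (fun p hp => ?_) (fun y _ => ?_)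
    fun p _ => hpairs p
  · simp [inverseSwitchings, freeBlackPairs, switchingPairs, IsBlackNonEdge,
      ← List.nodup_ofFn, pairs, Fin.forall_fin_succ] at hy ⊢
    tauto
  · rw [← hpairs p] at hp
    generalize unpairs p = y at hp ⊢
    simp [inverseSwitchings, freeBlackPairs, switchingPairs, IsBlackNonEdge,
      ← List.nodup_ofFn, pairs, Fin.forall_fin_succ] at hp ⊢
    tauto
  · funext j
    fin_cases j <;> rfl

theorem freeBlackPairs_subset_adjPairs (H G : SimpleGraph V) (v0 v3 v4 v5 v6 v7 : V) :
    freeBlackPairs H G v0 v3 v4 v5 v6 v7 ⊆ G.adjPairs := fun q hq => by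
  simp only [freeBlackPairs, mem_filter, SimpleGraph.mem_adjPairs, inf_adj] at hq
  exact SimpleGraph.mem_adjPairs.2 hq.1.1

theorem card_freeBlackPairs_le {G : SimpleGraph V} {d : ℕ} (H : SimpleGraph V)
    (hG : G.IsRegularOfDegree d) (v0 v3 v4 v5 v6 v7 : V) :
    #(freeBlackPairs H G v0 v3 v4 v5 v6 v7) ≤ d * Fintype.card V :=
  (card_le_card (freeBlackPairs_subset_adjPairs H G v0 v3 v4 v5 v6 v7)).trans
    (SimpleGraph.card_adjPairs_of_isRegular hG).le

theorem le_card_freeBlackPairs_add {G H : SimpleGraph V} {d i : ℕ} (hG : G.IsRegularOfDegree d)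
    (hred : (G ⊓ Hᶜ).edgeSet.ncard = i) (v0 v3 v4 v5 v6 v7 : V) :
    d * Fintype.card V ≤ #(freeBlackPairs H G v0 v3 v4 v5 v6 v7) + 2 * i + 6 := by
  have hsplit := SimpleGraph.card_adjPairs_inf_add_inf_compl (G := G) (H := H)
  rw [SimpleGraph.card_adjPairs (G := G ⊓ Hᶜ), hred,
    SimpleGraph.card_adjPairs_of_isRegular hG] at hsplit
  rw [← card_filter_add_card_filter_not (s := (G ⊓ H).adjPairs)
    (fun q => s(q.1, q.2) ∉ ({s(v0, v7), s(v3, v4), s(v5, v6)} : Finset (Sym2 V))),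
    ← freeBlackPairs] at hsplit
  simp only [not_not] at hsplit
  have := card_filter_sym2_mem_le (G ⊓ H).adjPairs {s(v0, v7), s(v3, v4), s(v5, v6)}
  have := card_le_three (a := s(v0, v7)) (b := s(v3, v4)) (c := s(v5, v6))
  omega

theorem card_inverseSwitchings_le (H G : SimpleGraph V) (v0 v1 v2 v3 v4 v5 v6 v7 : V) :
    #(inverseSwitchings H G v0 v1 v2 v3 v4 v5 v6 v7) ≤
      #(freeBlackPairs H G v0 v3 v4 v5 v6 v7) ^ 4 :=
  (card_filter_le _ _).trans (Fintype.card_piFinset_const _ 4).le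

theorem sum_card_filter_not_isBlackNonEdge_switchingPairs_le {G H : SimpleGraph V} {d Δ : ℕ}
    (hG : G.IsRegularOfDegree d) (hH : H.IsRegularOfDegree (Fintype.card V - Δ - 1))
    {v0 v1 v2 : V} (h01 : (G ⊓ Hᶜ).Adj v0 v1) (h12 : (G ⊓ Hᶜ).Adj v1 v2) (h02 : v0 ≠ v2)
    {A : Finset (V × V)} (hA : A ⊆ G.adjPairs) :
    ∑ j, #{p ∈ Fintype.piFinset (fun _ : Fin 4 => A) |
        ¬IsBlackNonEdge H G (switchingPairs v0 v1 v2 p j).1 (switchingPairs v0 v1 v2 p j).2} ≤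
      6 * (d + Δ) * d * #A ^ 3 := by
  let bad : V → ℕ := fun x => #{y | ¬IsBlackNonEdge H G x y}
  have hbad := SimpleGraph.card_filter_not_isBlackNonEdge_add_card_le hG hH
  have hbad0 : bad v0 + 1 ≤ d + Δ + 1 := by simpa using hbad v0 {v1} (by simpa using h01)
  have hbad1 : bad v1 + 2 ≤ d + Δ + 1 := by
    simpa [card_pair h02] using hbad v1 {v0, v2} (by simpa using ⟨h01.symm, h12⟩)
  have hbad2 : bad v2 + 1 ≤ d + Δ + 1 := by simpa using hbad v2 {v1} (by simpa using h12.symm)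
  have hbad : ∀ x, bad x ≤ d + Δ + 1 := fun x => by simpa using hbad x ∅ (by simp)
  have hfst : ∀ B, #{q ∈ A | q.1 ∈ B} ≤ #B * d := fun B =>
    (card_le_card (filter_subset_filter _ hA)).trans
      (SimpleGraph.card_filter_adjPairs_fst_mem_of_isRegular hG B).le
  have hsnd : ∀ B, #{q ∈ A | q.2 ∈ B} ≤ #B * d := fun B =>
    (card_le_card (filter_subset_filter _ hA)).trans
      (SimpleGraph.card_filter_adjPairs_snd_mem_of_isRegular hG B).le
  have hupdate : ∀ (j k : Fin 4) (p : Fin 4 → V × V) x, j ≠ k → update p k x j = p j :=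
    fun j k p x hjk => update_of_ne hjk x p
  rw [Fin.sum_univ_six]
  have h0 := card_filter_piFinset_not_rel_le A (0 : Fin 4) (IsBlackNonEdge H G) (fun _ => v0)
    (fun _ _ => rfl) Prod.fst hfst (b := bad v0) fun _ => le_rfl
  have h1 := card_filter_piFinset_not_rel_le A (1 : Fin 4) (IsBlackNonEdge H G) (fun _ => v1)
    (fun _ _ => rfl) Prod.fst hfst (b := bad v1) fun _ => le_rfl
  have h2 := card_filter_piFinset_not_rel_le A (2 : Fin 4) (IsBlackNonEdge H G) (fun _ => v1)
    (fun _ _ => rfl) Prod.fst hfst (b := bad v1) fun _ => le_rfl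
  have h3 := card_filter_piFinset_not_rel_le A (3 : Fin 4) (IsBlackNonEdge H G) (fun _ => v2)
    (fun _ _ => rfl) Prod.fst hfst (b := bad v2) fun _ => le_rfl
  have h4 := card_filter_piFinset_not_rel_le A (1 : Fin 4) (IsBlackNonEdge H G)
    (fun p => (p 0).2) (fun p x => by rw [hupdate 0 1 p x (by decide)]) Prod.snd hsnd
    fun p => hbad _
  have h5 := card_filter_piFinset_not_rel_le A (3 : Fin 4) (IsBlackNonEdge H G)
    (fun p => (p 2).2) (fun p x => by rw [hupdate 2 3 p x (by decide)]) Prod.snd hsnd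
    fun p => hbad _
  simp only [Fintype.card_fin] at h0 h1 h2 h3 h4 h5
  have hsum : (bad v0 + 2 * bad v1 + bad v2 + 2 * (d + Δ + 1)) * (d * #A ^ 3) ≤
      6 * (d + Δ) * (d * #A ^ 3) := Nat.mul_le_mul_right _ (by omega)
  refine (add_le_add (add_le_add (add_le_add (add_le_add (add_le_add h0 h1) h2) h3) h4) h5).trans
    (le_of_eq_of_le ?_ (hsum.trans_eq ?_)) <;> ring

theorem card_pow_four_le_card_inverseSwitchings_add (H G : SimpleGraph V)
    (v0 v1 v2 v3 v4 v5 v6 v7 : V) :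
    #(freeBlackPairs H G v0 v3 v4 v5 v6 v7) ^ 4 ≤
      #(inverseSwitchings H G v0 v1 v2 v3 v4 v5 v6 v7) +
        #{p ∈ Fintype.piFinset (fun _ : Fin 4 => freeBlackPairs H G v0 v3 v4 v5 v6 v7) |
          ¬Injective fun k => s((p k).1, (p k).2)} +
        ∑ j, #{p ∈ Fintype.piFinset (fun _ : Fin 4 => freeBlackPairs H G v0 v3 v4 v5 v6 v7) |
          ¬IsBlackNonEdge H G (switchingPairs v0 v1 v2 p j).1 (switchingPairs v0 v1 v2 p j).2} := by
  rw [← Fintype.card_piFinset_const]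
  set A4 := Fintype.piFinset fun _ : Fin 4 => freeBlackPairs H G v0 v3 v4 v5 v6 v7
  have hsplit := card_filter_add_card_filter_not (s := A4)
    fun p => Injective fun k => s((p k).1, (p k).2)
  have hforall := card_le_card_filter_forall_add_sum
    {p ∈ A4 | Injective fun k => s((p k).1, (p k).2)}
    fun j p => IsBlackNonEdge H G (switchingPairs v0 v1 v2 p j).1 (switchingPairs v0 v1 v2 p j).2
  have hmono := sum_le_sum fun j (_ : j ∈ univ) => card_le_card (filter_subset_filter
    (fun p => ¬IsBlackNonEdge H G (switchingPairs v0 v1 v2 p j).1 (switchingPairs v0 v1 v2 p j).2)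
    (filter_subset (fun p => Injective fun k => s((p k).1, (p k).2)) A4))
  have hS : #{p ∈ A4 | Injective fun k => s((p k).1, (p k).2)} ≤
      #(inverseSwitchings H G v0 v1 v2 v3 v4 v5 v6 v7) + ∑ j, #{p ∈ A4 |
        ¬IsBlackNonEdge H G (switchingPairs v0 v1 v2 p j).1 (switchingPairs v0 v1 v2 p j).2} := by
    convert Nat.le_trans hforall (Nat.add_le_add_left hmono _) using 3
    ext p
    simp only [inverseSwitchings, mem_filter, and_assoc]
    rfl
  omega

theorem card_freeBlackPairs_pow_four_le {G H : SimpleGraph V} {d Δ : ℕ}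
    (hG : G.IsRegularOfDegree d) (hH : H.IsRegularOfDegree (Fintype.card V - Δ - 1))
    {v0 v1 v2 : V} (v3 v4 v5 v6 v7 : V) (h01 : (G ⊓ Hᶜ).Adj v0 v1)
    (h12 : (G ⊓ Hᶜ).Adj v1 v2) (h02 : v0 ≠ v2) :
    #(freeBlackPairs H G v0 v3 v4 v5 v6 v7) ^ 4 ≤
      #(inverseSwitchings H G v0 v1 v2 v3 v4 v5 v6 v7) +
        12 * #(freeBlackPairs H G v0 v3 v4 v5 v6 v7) ^ 3 +
        6 * (d + Δ) * d * #(freeBlackPairs H G v0 v3 v4 v5 v6 v7) ^ 3 := by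
  have hinj := card_filter_piFinset_not_injective_sym2_le (ι := Fin 4)
    (freeBlackPairs H G v0 v3 v4 v5 v6 v7)
  rw [show #{jk : Fin 4 × Fin 4 | jk.1 < jk.2} = 6 by decide, Fintype.card_fin,
    show 4 - 1 = 3 from rfl] at hinj
  have hcond := sum_card_filter_not_isBlackNonEdge_switchingPairs_le hG hH h01 h12 h02
    (freeBlackPairs_subset_adjPairs H G v0 v3 v4 v5 v6 v7)
  have := card_pow_four_le_card_inverseSwitchings_add H G v0 v1 v2 v3 v4 v5 v6 v7
  omega

end InverseSwitching

theorem stmt_13_general (n d Δ i : ℕ)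
    (H : SimpleGraph (Fin n)) (hH : H.IsRegularOfDegree (n - Δ - 1))
    (hdn : 2 * i + 12 ≤ d * n)
    (G : SimpleGraph (Fin n)) (hreg : G.IsRegularOfDegree d)
    (hred : (G ⊓ Hᶜ).edgeSet.ncard = i)
    (v0 v1 v2 v3 v4 v5 v6 v7 : Fin n)
    (hoct : OctIIbPlus H G v0 v1 v2 v3 v4 v5 v6 v7) :
    ((d * n - 2 * i - 12 : ℤ) ^ 4 - 6 * (d * n) ^ 3 * d ^ 2
        - 6 * (d * n) ^ 3 * Δ * d) ≤
        (bhatIIb H G v0 v1 v2 v3 v4 v5 v6 v7 : ℤ) ∧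
      (bhatIIb H G v0 v1 v2 v3 v4 v5 v6 v7 : ℤ) ≤ (d * n : ℤ) ^ 4 := by
  obtain ⟨h01, h12, -, -, -, -, -, -, hdist⟩ := hoct
  have h02 : v0 ≠ v2 := fun h => (hdist.2 v0 (by simp)).1 h.symm
  have hcount := card_freeBlackPairs_pow_four_le hreg (by rwa [Fintype.card_fin]) v3 v4 v5 v6 v7
    h01 h12 h02
  have hle := card_freeBlackPairs_le H hreg v0 v3 v4 v5 v6 v7
  have hge := le_card_freeBlackPairs_add hreg hred v0 v3 v4 v5 v6 v7
  rw [Fintype.card_fin] at hle hge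
  rw [bhatIIb_eq_card_inverseSwitchings]
  exact ⟨pow_four_sub_le_of_card_bounds hdn hle hge hcount, by
    exact_mod_cast (card_inverseSwitchings_le H G v0 v1 v2 v3 v4 v5 v6 v7).trans
      (Nat.pow_le_pow_left hle 4)⟩

/-- Lemma 11 for Type IIb+. Suppose `H` is `(n-Δ-1)`-regular, `G` is
`d`-regular with exactly `i` red edges, `dn ≥ 2i + 12`, and `(v0,…,v7)` is a Type IIb+
octagon in `G`. Then `(dn−2i−12)⁴ − 6(dn)³d² − 6(dn)³Δd ≤ b̂(G,v) ≤ (dn)⁴`. -/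
theorem stmt_13 (n d Δ i : ℕ) (hd : 1 ≤ d) (hΔ1 : 1 ≤ Δ) (hΔ2 : Δ ≤ n - 1)
    (H : SimpleGraph (Fin n)) (hH : H.IsRegularOfDegree (n - Δ - 1))
    (hdn : 2 * i + 12 ≤ d * n)
    (G : SimpleGraph (Fin n)) (hreg : G.IsRegularOfDegree d)
    (hred : (G ⊓ Hᶜ).edgeSet.ncard = i)
    (v0 v1 v2 v3 v4 v5 v6 v7 : Fin n)
    (hoct : OctIIbPlus H G v0 v1 v2 v3 v4 v5 v6 v7) :
    ((d * n - 2 * i - 12 : ℤ) ^ 4 - 6 * (d * n) ^ 3 * d ^ 2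
        - 6 * (d * n) ^ 3 * Δ * d) ≤
        (bhatIIb H G v0 v1 v2 v3 v4 v5 v6 v7 : ℤ) ∧
      (bhatIIb H G v0 v1 v2 v3 v4 v5 v6 v7 : ℤ) ≤ (d * n : ℤ) ^ 4 :=
  stmt_13_general n d Δ i H hH hdn G hreg hred v0 v1 v2 v3 v4 v5 v6 v7 hoct
end
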